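/- Let G be a finite p-group with |G'| ≥ p². Then G has at most one abelian maximal subgroup. -/

import Mathlib

/-!
If `M₁ ≠ M₂` are abelian maximal subgroups of the `p`-group `G`, they are normal of index `p` and
generate `G`. Every commutator lies in `M₁ ∩ M₂`, which is central because it is centralized by both
`M₁` and `M₂`. So `G` has class at most two and, for `b ∈ M₂ \ M₁`, `g ↦ ⁅g, b⁆` is a homomorphism
whose kernel contains `M₂`; its image contains `G'` because `G = M₁⟨b⟩` with `M₁` abelian.
Hence `|G'| ≤ |G : M₂| = p`.
-/

/-- `G` is a minimal non-abelian group: non-abelian, but all proper subgroups abelian. -/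
def IsMinimalNonabelian (G : Type*) [Group G] : Prop :=
  (¬ ∀ a b : G, a * b = b * a) ∧
    ∀ H : Subgroup G, H ≠ ⊤ → ∀ a ∈ H, ∀ b ∈ H, a * b = b * a

/-- `G` is an `𝒜_t`-group: it has a non-abelian subgroup of index `p ^ (t-1)`,
but all subgroups of index `p ^ t` are abelian. -/
def IsAGroup (p t : ℕ) (G : Type*) [Group G] : Prop :=
  (∃ H : Subgroup G, H.index = p ^ (t - 1) ∧ ¬ ∀ a ∈ H, ∀ b ∈ H, a * b = b * a) ∧
    ∀ H : Subgroup G, H.index = p ^ t → ∀ a ∈ H, ∀ b ∈ H, a * b = b * a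

section

open Subgroup
open scoped commutatorElement

variable {G : Type*} [Group G]

theorem IsCoatom.sup_zpowers_eq_top {M : Subgroup G} (hM : IsCoatom M) {g : G} (hg : g ∉ M) :
    M ⊔ zpowers g = ⊤ :=
  codisjoint_iff.mp (hM.not_le_iff_codisjoint.mp (by rwa [zpowers_le]))

theorem IsCoatom.commutator_le {M : Subgroup G} [M.Normal] (hM : IsCoatom M) :
    commutator G ≤ M := by
  obtain ⟨g, -, hg⟩ := SetLike.exists_of_lt hM.lt_top
  exact Normal.commutator_le_of_self_sup_commutative_eq_top (hM.sup_zpowers_eq_top hg)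
    inferInstance

theorem Subgroup.inf_le_center_of_sup_eq_top {H K : Subgroup G}
    (hH : ∀ a ∈ H, ∀ b ∈ H, a * b = b * a) (hK : ∀ a ∈ K, ∀ b ∈ K, a * b = b * a)
    (hHK : H ⊔ K = ⊤) : H ⊓ K ≤ center G := by
  rw [← centralizer_univ, ← coe_top, ← hHK, le_centralizer_iff]
  exact sup_le (fun x hx z hz => hH _ hz.1 _ hx) (fun x hx z hz => hK _ hz.2 _ hx)

theorem commutatorElement_mul_left_of_mem_center {g₂ h : G} (hc : ⁅g₂, h⁆ ∈ center G)
    (g₁ : G) : ⁅g₁ * g₂, h⁆ = ⁅g₁, h⁆ * ⁅g₂, h⁆ :=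
  calc ⁅g₁ * g₂, h⁆ = g₁ * ⁅g₂, h⁆ * (h * g₁⁻¹ * h⁻¹) := by
        simp only [commutatorElement_def]; group
    _ = ⁅g₂, h⁆ * ⁅g₁, h⁆ := by
        rw [mem_center_iff.mp hc g₁, commutatorElement_def]; group
    _ = ⁅g₁, h⁆ * ⁅g₂, h⁆ := (mem_center_iff.mp hc _).symm

def commutatorLeftHom (hG : commutator G ≤ center G) (b : G) : G →* G where
  toFun g := ⁅g, b⁆
  map_one' := by simp [commutatorElement_def]
  map_mul' g₁ g₂ :=
    commutatorElement_mul_left_of_mem_center (hG (commutator_mem_commutator (mem_top g₂)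
      (mem_top b))) g₁

theorem commutator_le_range_commutatorLeftHom (hG : commutator G ≤ center G) {H : Subgroup G}
    (hH : ∀ a ∈ H, ∀ b ∈ H, a * b = b * a) {b : G} (hHb : H ⊔ zpowers b = ⊤) :
    commutator G ≤ (commutatorLeftHom hG b).range := by
  set N := (commutatorLeftHom hG b).range
  have hbN (g : G) : ⁅b, g⁆ ∈ N := by
    rw [← commutatorElement_inv]; exact inv_mem ⟨g, rfl⟩
  -- For fixed `y`, the `x` with `⁅x, y⁆ ∈ N` form a subgroup, so `x ∈ H` and `x = b` suffice.
  have hN (y : G) (hy : ∀ x ∈ H, ⁅x, y⁆ ∈ N) (x : G) : ⁅x, y⁆ ∈ N := by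
    have : H ⊔ zpowers b ≤ N.comap (commutatorLeftHom hG y) :=
      sup_le hy (zpowers_le.mpr (hbN y))
    exact this (hHb ▸ mem_top x)
  rw [commutator_def, commutator_le]
  refine fun x _ y _ => hN y (fun m hm => ?_) x
  rw [← commutatorElement_inv]
  refine inv_mem (hN m (fun m' hm' => ?_) y)
  rw [commutatorElement_eq_one_iff_mul_comm.mpr (hH _ hm' _ hm)]
  exact one_mem N

theorem card_commutator_le_index [Finite G] (hG : commutator G ≤ center G) {H K : Subgroup G}
    (hH : ∀ a ∈ H, ∀ b ∈ H, a * b = b * a) (hK : ∀ a ∈ K, ∀ b ∈ K, a * b = b * a) {b : G}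
    (hbK : b ∈ K) (hHb : H ⊔ zpowers b = ⊤) : Nat.card (commutator G) ≤ K.index :=
  calc Nat.card (commutator G) ≤ Nat.card (commutatorLeftHom hG b).range :=
        card_le_of_le (commutator_le_range_commutatorLeftHom hG hH hHb)
    _ = (commutatorLeftHom hG b).ker.index := (index_ker _).symm
    _ ≤ K.index := index_antitone fun _ hk =>
        commutatorElement_eq_one_iff_mul_comm.mpr (hK _ hk _ hbK)

namespace IsPGroup

variable {p : ℕ} [Fact p.Prime] [Finite G]

theorem index_eq_of_isCoatom (hG : IsPGroup p G) {M : Subgroup G} (hM : IsCoatom M) :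
    M.index = p := by
  obtain ⟨n, hn⟩ := iff_card.mp (hG.to_subgroup M)
  obtain ⟨k, hk⟩ := hG.index M
  have hk0 : k ≠ 0 := by
    rintro rfl
    exact hM.ne_top (index_eq_one.mp (by rw [hk, pow_zero]))
  have hdvd : p ^ (n + 1) ∣ Nat.card G := by
    rw [← card_mul_index M, hn, hk, pow_succ]
    exact mul_dvd_mul_left _ (dvd_pow_self p hk0)
  obtain ⟨K, hK, hMK⟩ := Sylow.exists_subgroup_card_pow_succ hdvd hn
  have hKM : K ≠ M := fun h => by
    rw [h, hn] at hK
    exact (Nat.pow_lt_pow_succ (Fact.out : p.Prime).one_lt).ne hK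
  have hKtop : K = ⊤ := (hM.le_iff.mp hMK).resolve_right hKM
  have : Nat.card M * M.index = Nat.card M * p := by
    rw [card_mul_index, ← card_top (G := G), ← hKtop, hK, hn, pow_succ]
  exact Nat.eq_of_mul_eq_mul_left Nat.card_pos this

theorem commutator_le_of_isCoatom (hG : IsPGroup p G) {M : Subgroup G} (hM : IsCoatom M) :
    commutator G ≤ M :=
  have := NormalizerCondition.normal_of_coatom M
    (Group.normalizerCondition_of_isNilpotent (h := hG.isNilpotent)) hM
  hM.commutator_le

end IsPGroup

end

theorem stmt14 {p : ℕ} (hp : p.Prime) {G : Type*} [Group G] [Finite G]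
    (hG : IsPGroup p G) (hG' : p ^ 2 ≤ Nat.card (commutator G))
    {M₁ M₂ : Subgroup G} (h₁ : IsCoatom M₁) (h₂ : IsCoatom M₂)
    (hab₁ : ∀ a ∈ M₁, ∀ b ∈ M₁, a * b = b * a)
    (hab₂ : ∀ a ∈ M₂, ∀ b ∈ M₂, a * b = b * a) :
    M₁ = M₂ := by
  have : Fact p.Prime := ⟨hp⟩
  by_contra hne
  have hclass : commutator G ≤ Subgroup.center G :=
    (le_inf (hG.commutator_le_of_isCoatom h₁) (hG.commutator_le_of_isCoatom h₂)).trans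
      (Subgroup.inf_le_center_of_sup_eq_top hab₁ hab₂ (h₁.sup_eq_top_of_ne h₂ hne))
  obtain ⟨b, hb₂, hb₁⟩ : ∃ b ∈ M₂, b ∉ M₁ :=
    SetLike.not_le_iff_exists.mp fun h => hne ((h₂.le_iff_eq h₁.ne_top).mp h)
  have hcard := card_commutator_le_index hclass hab₁ hab₂ hb₂ (h₁.sup_zpowers_eq_top hb₁)
  rw [hG.index_eq_of_isCoatom h₂] at hcard
  nlinarith [hp.two_le]
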